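/- arXiv:0801.0103 — 3 statements merged into one kernel-verified Lean document; each statement's English description precedes it below -/
import Mathlib

section
/- Let λ > 0, Λ ∈ ℝ, L > 0. Let r : [0,L] → ℝ be continuous and h : [0,L] → ℝ be twice continuously differentiable with h''(t) ≥ λ − r(t) for all t ∈ [0,L]. If ∫₀^t r(s) ds ≤ Λ for every t ∈ [0,L], then h(L) ≥ h(0) + (λ/2)·L² − (|h'(0)| + Λ)·L. -/
/-!
Integrating `h'' ≥ λ - r` once and using `∫₀^t r ≤ Λ` gives the linear lower bound
`h'(t) ≥ h'(0) + λ t - Λ` on `[0, L]`; integrating that bound a second time gives the claim,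
since `h'(0) ≥ -|h'(0)|` and `L ≥ 0`.
-/

open Set MeasureTheory intervalIntegral

theorem integral_le_sub_of_hasDerivWithinAt_Icc {f f' g : ℝ → ℝ} {a b : ℝ} (hab : a ≤ b)
    (hf : ∀ x ∈ Icc a b, HasDerivWithinAt f (f' x) (Icc a b) x)
    (hg : IntegrableOn g (Icc a b)) (hgf : ∀ x ∈ Icc a b, g x ≤ f' x) :
    ∫ x in a..b, g x ≤ f b - f a :=
  integral_le_sub_of_hasDeriv_right_of_le hab
    (fun x hx => (hf x hx).continuousWithinAt)
    (fun x hx => ((hf x (Ioo_subset_Icc_self hx)).hasDerivAt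
      (Icc_mem_nhds hx.1 hx.2)).hasDerivWithinAt)
    hg (fun x hx => hgf x (Ioo_subset_Icc_self hx))

theorem add_mul_sub_le_of_integral_le {lam Λ L : ℝ} {r h' h'' : ℝ → ℝ}
    (hr : ContinuousOn r (Icc 0 L))
    (hd : ∀ t ∈ Icc (0:ℝ) L, HasDerivWithinAt h' (h'' t) (Icc 0 L) t)
    (hbound : ∀ t ∈ Icc (0:ℝ) L, lam - r t ≤ h'' t)
    (hint : ∀ t ∈ Icc (0:ℝ) L, ∫ s in (0:ℝ)..t, r s ≤ Λ) :
    ∀ t ∈ Icc (0:ℝ) L, h' 0 + lam * t - Λ ≤ h' t := by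
  intro t ht
  have hsub : Icc 0 t ⊆ Icc 0 L := Icc_subset_Icc_right ht.2
  have hr_int : IntervalIntegrable r volume 0 t := (hr.mono hsub).intervalIntegrable_of_Icc ht.1
  have hftc : ∫ s in (0:ℝ)..t, (lam - r s) ≤ h' t - h' 0 :=
    integral_le_sub_of_hasDerivWithinAt_Icc ht.1
      (fun s hs => (hd s (hsub hs)).mono hsub)
      ((continuousOn_const.sub (hr.mono hsub)).integrableOn_Icc)
      (fun s hs => hbound s (hsub hs))
  rw [intervalIntegral.integral_sub intervalIntegrable_const hr_int,
    intervalIntegral.integral_const, smul_eq_mul] at hftc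
  linarith [hint t ht]

theorem integral_const_add_mul_id (c lam L : ℝ) :
    ∫ t in (0:ℝ)..L, (c + lam * t) = c * L + lam / 2 * L ^ 2 := by
  rw [intervalIntegral.integral_add intervalIntegrable_const
    ((continuous_const_mul lam).intervalIntegrable 0 L), intervalIntegral.integral_const_mul,
    integral_id, intervalIntegral.integral_const, smul_eq_mul]
  ring

theorem stmt_1_general (lam Λ L : ℝ) (hL : 0 < L)
    (r h h' h'' : ℝ → ℝ)
    (hr : ContinuousOn r (Set.Icc 0 L))
    (hd1 : ∀ t ∈ Set.Icc (0:ℝ) L, HasDerivWithinAt h (h' t) (Set.Icc 0 L) t)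
    (hd2 : ∀ t ∈ Set.Icc (0:ℝ) L, HasDerivWithinAt h' (h'' t) (Set.Icc 0 L) t)
    (hbound : ∀ t ∈ Set.Icc (0:ℝ) L, lam - r t ≤ h'' t)
    (hint : ∀ t ∈ Set.Icc (0:ℝ) L, (∫ s in (0:ℝ)..t, r s) ≤ Λ) :
    h 0 + (lam / 2) * L ^ 2 - (|h' 0| + Λ) * L ≤ h L := by
  have hh' := add_mul_sub_le_of_integral_le hr hd2 hbound hint
  have hh : ∫ t in (0:ℝ)..L, ((h' 0 - Λ) + lam * t) ≤ h L - h 0 :=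
    integral_le_sub_of_hasDerivWithinAt_Icc hL.le hd1
      (Continuous.integrableOn_Icc (by fun_prop))
      (fun t ht => by linarith [hh' t ht])
  rw [integral_const_add_mul_id] at hh
  nlinarith [neg_abs_le (h' 0)]

/-- If `h'' ≥ λ - r` on `[0, L]` and `∫₀^t r ≤ Λ` for every `t ∈ [0, L]`,
then `h(L) ≥ h(0) + (λ/2)·L² - (|h'(0)| + Λ)·L`. -/
theorem stmt_1 (lam Λ L : ℝ) (hlam : 0 < lam) (hL : 0 < L)
    (r h h' h'' : ℝ → ℝ)
    (hr : ContinuousOn r (Set.Icc 0 L))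
    (hd1 : ∀ t ∈ Set.Icc (0:ℝ) L, HasDerivWithinAt h (h' t) (Set.Icc 0 L) t)
    (hd2 : ∀ t ∈ Set.Icc (0:ℝ) L, HasDerivWithinAt h' (h'' t) (Set.Icc 0 L) t)
    (hc2 : ContinuousOn h'' (Set.Icc 0 L))
    (hbound : ∀ t ∈ Set.Icc (0:ℝ) L, lam - r t ≤ h'' t)
    (hint : ∀ t ∈ Set.Icc (0:ℝ) L, (∫ s in (0:ℝ)..t, r s) ≤ Λ) :
    h 0 + (lam / 2) * L ^ 2 - (|h' 0| + Λ) * L ≤ h L :=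
  stmt_1_general lam Λ L hL r h h' h'' hr hd1 hd2 hbound hint
end

section
/- Let n ≥ 1 be an integer, K ≥ 0, D ≥ 0, and ρ ≥ 2. Let ψ : [0,ρ] → [0,1] be the piecewise-linear cutoff with ψ(t) = t on [0,1], ψ ≡ 1 on [1, ρ−1], and ψ(t) = ρ−t on [ρ−1, ρ]. Let r : [0,ρ] → ℝ be continuous and h : [0,ρ] → ℝ be twice continuously differentiable such that: (a) r(t) = 1/2 − h''(t) for all t ∈ [ρ−1, ρ]; (b) h'(ρ) = 0; (c) |r(t)| ≤ K for all t ∈ [0,1]; (d) ∫₀^ρ ψ(t)² r(t) dt ≤ 2(n−1); (e) |h(s) − h(t)| ≤ D for all s, t ∈ [ρ−1, ρ]. Then ∫₀^ρ r(t) dt ≤ 2n + K + 2D. -/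
open Set MeasureTheory intervalIntegral

/-!
Split `∫ r = ∫ ψ² r + ∫ (1 - ψ²) r`. The weight `1 - ψ²` vanishes on `[1, ρ - 1]` and lies in
`[0, 1]` on `[0, 1]`, where `|r| ≤ K`. On `[ρ - 1, ρ]` it is `1 - (ρ - t)²`, which vanishes at
`ρ - 1` while its derivative `2 (ρ - t)` vanishes at `ρ`, so two integrations by parts against
`r = 1/2 - h''` turn that piece into `1/3 - h'(ρ) + 2 ∫ (h - h(ρ - 1)) ≤ 1/3 + 2D`.
-/

theorem continuousOn_of_cutoff {ψ : ℝ → ℝ} {ρ : ℝ} (hρ : 2 ≤ ρ)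
    (hψ1 : ∀ t ∈ Icc (0:ℝ) 1, ψ t = t)
    (hψ2 : ∀ t ∈ Icc (1:ℝ) (ρ - 1), ψ t = 1)
    (hψ3 : ∀ t ∈ Icc (ρ - 1) ρ, ψ t = ρ - t) :
    ContinuousOn ψ (Icc 0 ρ) := by
  refine ContinuousOn.congr (f := fun t => min (min t 1) (ρ - t)) (by fun_prop) ?_
  rintro t ⟨ht0, htρ⟩
  rcases le_total t 1 with ht1 | ht1
  · rw [hψ1 t ⟨ht0, ht1⟩]; grind
  rcases le_total t (ρ - 1) with ht2 | ht2
  · rw [hψ2 t ⟨ht1, ht2⟩]; grind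
  · rw [hψ3 t ⟨ht2, htρ⟩]; grind

theorem integral_eq_add_add_of_continuousOn {f : ℝ → ℝ} {a b c d : ℝ} (hab : a ≤ b) (hbc : b ≤ c)
    (hcd : c ≤ d) (hf : ContinuousOn f (Icc a d)) :
    ∫ t in a..d, f t = (∫ t in a..b, f t) + (∫ t in b..c, f t) + ∫ t in c..d, f t := by
  have hint {x y : ℝ} (hx : a ≤ x) (hxy : x ≤ y) (hy : y ≤ d) : IntervalIntegrable f volume x y :=
    (hf.mono (Icc_subset_Icc hx hy)).intervalIntegrable_of_Icc hxy
  rw [integral_add_adjacent_intervals (hint le_rfl hab (hbc.trans hcd)) (hint hab hbc hcd),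
    integral_add_adjacent_intervals (hint le_rfl (hab.trans hbc) hcd)
      (hint (hab.trans hbc) hcd le_rfl)]

theorem integral_one_sub_sq_mul_eq_of_cutoff {ψ r : ℝ → ℝ} {ρ : ℝ} (hρ : 2 ≤ ρ)
    (hψ1 : ∀ t ∈ Icc (0:ℝ) 1, ψ t = t)
    (hψ2 : ∀ t ∈ Icc (1:ℝ) (ρ - 1), ψ t = 1)
    (hψ3 : ∀ t ∈ Icc (ρ - 1) ρ, ψ t = ρ - t) (hr : ContinuousOn r (Icc 0 ρ)) :
    ∫ t in (0:ℝ)..ρ, (1 - ψ t ^ 2) * r t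
      = (∫ t in (0:ℝ)..1, (1 - t ^ 2) * r t) + ∫ t in (ρ - 1)..ρ, (1 - (ρ - t) ^ 2) * r t := by
  have hψ := continuousOn_of_cutoff hρ hψ1 hψ2 hψ3
  have hstart : ∫ t in (0:ℝ)..1, (1 - ψ t ^ 2) * r t = ∫ t in (0:ℝ)..1, (1 - t ^ 2) * r t :=
    integral_congr <| by rw [uIcc_of_le zero_le_one]; exact fun t ht => by simp only [hψ1 t ht]
  have hmiddle : ∫ t in (1:ℝ)..(ρ - 1), (1 - ψ t ^ 2) * r t = 0 :=
    (integral_congr (g := fun _ => 0) <| by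
      rw [uIcc_of_le (by linarith)]; exact fun t ht => by simp [hψ2 t ht]).trans integral_zero
  have hend : ∫ t in (ρ - 1)..ρ, (1 - ψ t ^ 2) * r t = ∫ t in (ρ - 1)..ρ, (1 - (ρ - t) ^ 2) * r t :=
    integral_congr <| by rw [uIcc_of_le (by linarith)]; exact fun t ht => by simp only [hψ3 t ht]
  rw [integral_eq_add_add_of_continuousOn (b := 1) (c := ρ - 1) zero_le_one (by linarith)
    (by linarith) (by fun_prop), hstart, hmiddle, hend, add_zero]

theorem integral_one_sub_sq_mul_le_of_abs_le {r : ℝ → ℝ} {K : ℝ}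
    (hr : ∀ t ∈ Icc (0:ℝ) 1, |r t| ≤ K) : ∫ t in (0:ℝ)..1, (1 - t ^ 2) * r t ≤ K := by
  have hbound : ∀ t ∈ uIoc (0:ℝ) 1, ‖(1 - t ^ 2) * r t‖ ≤ K := by
    intro t ht
    rw [uIoc_of_le zero_le_one] at ht
    obtain ⟨ht0, ht1⟩ := ht
    rw [Real.norm_eq_abs, abs_mul, abs_of_nonneg (by nlinarith)]
    nlinarith [hr t ⟨ht0.le, ht1⟩, abs_nonneg (r t)]
  simpa using (le_abs_self _).trans (norm_integral_le_of_norm_le_const hbound)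

theorem integral_one_sub_sub_sq_mul_add_two_mul_eq {h h' h'' : ℝ → ℝ} {b : ℝ}
    (hd1 : ∀ t ∈ Icc (b - 1) b, HasDerivWithinAt h (h' t) (Icc (b - 1) b) t)
    (hd2 : ∀ t ∈ Icc (b - 1) b, HasDerivWithinAt h' (h'' t) (Icc (b - 1) b) t)
    (hc2 : ContinuousOn h'' (Icc (b - 1) b)) :
    ∫ t in (b - 1)..b, ((1 - (b - t) ^ 2) * h'' t + 2 * h t) = h' b + 2 * h (b - 1) := by
  have hch : ContinuousOn h (Icc (b - 1) b) := fun t ht => (hd1 t ht).continuousWithinAt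
  have hch' : ContinuousOn h' (Icc (b - 1) b) := fun t ht => (hd2 t ht).continuousWithinAt
  rw [integral_eq_sub_of_hasDerivAt_of_le
    (f := fun t => (1 - (b - t) ^ 2) * h' t - 2 * (b - t) * h t) (by linarith) (by fun_prop) _
    (ContinuousOn.intervalIntegrable_of_Icc (by linarith) (by fun_prop))]
  · ring
  intro t ht
  have hnhds : Icc (b - 1) b ∈ nhds t := Icc_mem_nhds ht.1 ht.2
  have hw : HasDerivAt (fun t => b - t) (-1) t := (hasDerivAt_id t).const_sub b
  exact (((hw.pow 2).const_sub 1).mul ((hd2 t (Ioo_subset_Icc_self ht)).hasDerivAt hnhds)).sub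
    ((hw.const_mul 2).mul ((hd1 t (Ioo_subset_Icc_self ht)).hasDerivAt hnhds)) |>.congr_deriv
    (by simp only [Pi.pow_apply]; ring)

theorem integral_one_sub_sub_sq_mul_le {r h h' h'' : ℝ → ℝ} {b D : ℝ}
    (hd1 : ∀ t ∈ Icc (b - 1) b, HasDerivWithinAt h (h' t) (Icc (b - 1) b) t)
    (hd2 : ∀ t ∈ Icc (b - 1) b, HasDerivWithinAt h' (h'' t) (Icc (b - 1) b) t)
    (hc2 : ContinuousOn h'' (Icc (b - 1) b)) (ha : ∀ t ∈ Icc (b - 1) b, r t = 1 / 2 - h'' t)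
    (hb : h' b = 0) (he : ∀ s ∈ Icc (b - 1) b, ∀ t ∈ Icc (b - 1) b, |h s - h t| ≤ D) :
    ∫ t in (b - 1)..b, (1 - (b - t) ^ 2) * r t ≤ 1 / 3 + 2 * D := by
  have hab : b - 1 ≤ b := by linarith
  have hch : ContinuousOn h (Icc (b - 1) b) := fun t ht => (hd1 t ht).continuousWithinAt
  have hint {f : ℝ → ℝ} (hf : ContinuousOn f (Icc (b - 1) b)) :
      IntervalIntegrable f volume (b - 1) b :=
    hf.intervalIntegrable_of_Icc hab
  have hpoly (c : ℝ) : ∫ t in (b - 1)..b, ((1 - (b - t) ^ 2) / 2 + 2 * c) = 1 / 3 + 2 * c := by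
    have hint01 {f : ℝ → ℝ} (hf : Continuous f) : IntervalIntegrable f volume 0 1 :=
      hf.intervalIntegrable _ _
    rw [integral_comp_sub_left (fun x => (1 - x ^ 2) / 2 + 2 * c) b]
    simp only [sub_self, sub_sub_cancel]
    rw [integral_add (hint01 (by fun_prop)) (hint01 (by fun_prop)), intervalIntegral.integral_div,
      integral_sub (hint01 (by fun_prop)) (hint01 (by fun_prop))]
    norm_num
  have hosc : ∫ t in (b - 1)..b, ((1 - (b - t) ^ 2) / 2 + 2 * h t)
      ≤ ∫ t in (b - 1)..b, ((1 - (b - t) ^ 2) / 2 + 2 * (h (b - 1) + D)) := by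
    refine integral_mono_on hab (hint (by fun_prop)) (hint (by fun_prop)) fun t ht => ?_
    linarith [(abs_le.mp (he t ht (b - 1) ⟨le_rfl, hab⟩)).2]
  calc ∫ t in (b - 1)..b, (1 - (b - t) ^ 2) * r t
      = (∫ t in (b - 1)..b, ((1 - (b - t) ^ 2) / 2 + 2 * h t))
        - ∫ t in (b - 1)..b, ((1 - (b - t) ^ 2) * h'' t + 2 * h t) := by
        rw [← integral_sub (hint (by fun_prop)) (hint (by fun_prop))]
        refine integral_congr fun t ht => ?_
        rw [uIcc_of_le hab] at ht
        simp only [ha t ht]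
        ring
    _ ≤ 1 / 3 + 2 * D := by
        rw [integral_one_sub_sub_sq_mul_add_two_mul_eq hd1 hd2 hc2, hb]
        linarith [hpoly (h (b - 1) + D)]

theorem stmt_8_general (n : ℕ) (K D ρ : ℝ) (hρ : 2 ≤ ρ)
    (ψ r h h' h'' : ℝ → ℝ)
    (hψ1 : ∀ t ∈ Set.Icc (0:ℝ) 1, ψ t = t)
    (hψ2 : ∀ t ∈ Set.Icc (1:ℝ) (ρ - 1), ψ t = 1)
    (hψ3 : ∀ t ∈ Set.Icc (ρ - 1) ρ, ψ t = ρ - t)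
    (hr : ContinuousOn r (Set.Icc 0 ρ))
    (hd1 : ∀ t ∈ Set.Icc (0:ℝ) ρ, HasDerivWithinAt h (h' t) (Set.Icc 0 ρ) t)
    (hd2 : ∀ t ∈ Set.Icc (0:ℝ) ρ, HasDerivWithinAt h' (h'' t) (Set.Icc 0 ρ) t)
    (hc2 : ContinuousOn h'' (Set.Icc 0 ρ))
    (ha : ∀ t ∈ Set.Icc (ρ - 1) ρ, r t = 1 / 2 - h'' t)
    (hb : h' ρ = 0)
    (hc : ∀ t ∈ Set.Icc (0:ℝ) 1, |r t| ≤ K)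
    (hd : (∫ t in (0:ℝ)..ρ, (ψ t) ^ 2 * r t) ≤ 2 * ((n : ℝ) - 1))
    (he : ∀ s ∈ Set.Icc (ρ - 1) ρ, ∀ t ∈ Set.Icc (ρ - 1) ρ, |h s - h t| ≤ D) :
    (∫ t in (0:ℝ)..ρ, r t) ≤ 2 * (n : ℝ) + K + 2 * D := by
  have hψ := continuousOn_of_cutoff hρ hψ1 hψ2 hψ3
  have hsplit : ∫ t in (0:ℝ)..ρ, r t
      = (∫ t in (0:ℝ)..ρ, ψ t ^ 2 * r t) + ∫ t in (0:ℝ)..ρ, (1 - ψ t ^ 2) * r t := by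
    rw [← integral_add (ContinuousOn.intervalIntegrable_of_Icc (by linarith) (by fun_prop))
      (ContinuousOn.intervalIntegrable_of_Icc (by linarith) (by fun_prop))]
    exact integral_congr fun t _ => by ring
  rw [integral_one_sub_sq_mul_eq_of_cutoff hρ hψ1 hψ2 hψ3 hr] at hsplit
  have hsub : Icc (ρ - 1) ρ ⊆ Icc 0 ρ := Icc_subset_Icc (by linarith) le_rfl
  have hend := integral_one_sub_sub_sq_mul_le (fun t ht => (hd1 t (hsub ht)).mono hsub)
    (fun t ht => (hd2 t (hsub ht)).mono hsub) (hc2.mono hsub) ha hb he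
  linarith [integral_one_sub_sq_mul_le_of_abs_le hc]

/-- the real-variable content of Lemma 3.2: with the cutoff `ψ` on `[0, ρ]`,
`r = 1/2 - h''` on `[ρ-1, ρ]`, `h'(ρ) = 0`, `|r| ≤ K` on `[0, 1]`,
`∫₀^ρ ψ² r ≤ 2(n-1)`, and oscillation of `h` on `[ρ-1, ρ]` at most `D`, we get
`∫₀^ρ r ≤ 2n + K + 2D`. -/
theorem stmt_8 (n : ℕ) (hn : 1 ≤ n) (K D ρ : ℝ) (hK : 0 ≤ K) (hD : 0 ≤ D) (hρ : 2 ≤ ρ)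
    (ψ r h h' h'' : ℝ → ℝ)
    (hψmem : ∀ t ∈ Set.Icc (0:ℝ) ρ, ψ t ∈ Set.Icc (0:ℝ) 1)
    (hψ1 : ∀ t ∈ Set.Icc (0:ℝ) 1, ψ t = t)
    (hψ2 : ∀ t ∈ Set.Icc (1:ℝ) (ρ - 1), ψ t = 1)
    (hψ3 : ∀ t ∈ Set.Icc (ρ - 1) ρ, ψ t = ρ - t)
    (hr : ContinuousOn r (Set.Icc 0 ρ))
    (hd1 : ∀ t ∈ Set.Icc (0:ℝ) ρ, HasDerivWithinAt h (h' t) (Set.Icc 0 ρ) t)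
    (hd2 : ∀ t ∈ Set.Icc (0:ℝ) ρ, HasDerivWithinAt h' (h'' t) (Set.Icc 0 ρ) t)
    (hc2 : ContinuousOn h'' (Set.Icc 0 ρ))
    (ha : ∀ t ∈ Set.Icc (ρ - 1) ρ, r t = 1 / 2 - h'' t)
    (hb : h' ρ = 0)
    (hc : ∀ t ∈ Set.Icc (0:ℝ) 1, |r t| ≤ K)
    (hd : (∫ t in (0:ℝ)..ρ, (ψ t) ^ 2 * r t) ≤ 2 * ((n : ℝ) - 1))
    (he : ∀ s ∈ Set.Icc (ρ - 1) ρ, ∀ t ∈ Set.Icc (ρ - 1) ρ, |h s - h t| ≤ D) :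
    (∫ t in (0:ℝ)..ρ, r t) ≤ 2 * (n : ℝ) + K + 2 * D :=
  stmt_8_general n K D ρ hρ ψ r h h' h'' hψ1 hψ2 hψ3 hr hd1 hd2 hc2 ha hb hc hd he
end

section
/- Let n ≥ 1 be an integer, C ≥ 0, K ≥ 0, and ρ ≥ 2. Let ψ : [0,ρ] → [0,1] be the piecewise-linear cutoff with ψ(t) = t on [0,1], ψ ≡ 1 on [1, ρ−1], and ψ(t) = ρ−t on [ρ−1, ρ]. Let h : [0,ρ] → ℝ be twice continuously differentiable and set r(t) = 1/2 − h''(t), and suppose: (a) h'(ρ) = 0; (b) |r(t)| ≤ K for all t ∈ [0,1]; (c) ∫₀^ρ ψ(t)² r(t) dt ≤ 2(n−1); (d) h(t) + C ≥ 0 and |h'(t)| ≤ √(h(t) + C) for all t ∈ [ρ−1, ρ]; (e) |h(ρ)| ≤ C. Then ρ ≤ 4n + 2K + 16C + 8 + 2|h'(0)|. -/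
/-!
On `[ρ - 1, ρ]` the gradient bound `|h'| ≤ √(h + C)` and `h(ρ) ≤ C` give `|h'| ≤ 2 + C`: if
`s² = max (h + C)`, then `h` drops by at most `s` over an interval of length `≤ 1`, so
`s² ≤ 2C + s`. Splitting `∫ ψ² r` along the three pieces of `ψ`, each piece is bounded below by
integrating `r = 1/2 - h''` exactly, up to an error `K` on `[0, 1]` and, after integrating by
parts against `(ρ - t)²`, an error `2(2 + C)` on `[ρ - 1, ρ]`. The boundary values `h'(1)` and
`h'(ρ - 1)` telescope, and the middle piece contributes `(ρ - 2)/2`, so `ρ` is bounded by the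
second variation bound `2(n - 1)`.
-/

open Set MeasureTheory intervalIntegral Real

theorem abs_deriv_le_of_abs_deriv_le_sqrt {a b C : ℝ} {h h' : ℝ → ℝ} (hab : a ≤ b)
    (hlen : b - a ≤ 1) (hd : ∀ t ∈ Icc a b, HasDerivWithinAt h (h' t) (Icc a b) t)
    (hsqrt : ∀ t ∈ Icc a b, 0 ≤ h t + C ∧ |h' t| ≤ √(h t + C)) (hb : h b ≤ C) :
    ∀ t ∈ Icc a b, |h' t| ≤ 2 + C := by
  obtain ⟨t₀, ht₀, hmax⟩ := isCompact_Icc.exists_isMaxOn (nonempty_Icc.2 hab)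
    (HasDerivWithinAt.continuousOn hd)
  set s := √(h t₀ + C)
  have hslope : ∀ t ∈ Icc a b, |h' t| ≤ s := fun t ht =>
    (hsqrt t ht).2.trans (sqrt_le_sqrt (by linarith [show h t ≤ h t₀ from hmax ht]))
  have hdrop : |h b - h t₀| ≤ s * |b - t₀| := by
    simpa only [Real.norm_eq_abs] using Convex.norm_image_sub_le_of_norm_hasDerivWithin_le hd
      (by simpa only [Real.norm_eq_abs] using hslope) (convex_Icc a b) ht₀ (right_mem_Icc.2 hab)
  have hdist : |b - t₀| ≤ 1 := abs_le.2 ⟨by linarith [ht₀.2], by linarith [ht₀.1]⟩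
  have hsq : s ^ 2 = h t₀ + C := sq_sqrt (hsqrt t₀ ht₀).1
  have hs0 : 0 ≤ s := sqrt_nonneg _
  have hquad : s ^ 2 ≤ 2 * C + s := by
    nlinarith [neg_abs_le (h b - h t₀), mul_le_mul_of_nonneg_left hdist hs0]
  have hC : 0 ≤ C := by linarith [(hsqrt b (right_mem_Icc.2 hab)).1]
  have hs_le : s ≤ 2 + C := by
    by_contra! hlt
    nlinarith [mul_pos (sub_pos.2 hlt) (by linarith : 0 < s + 1 + C)]
  exact fun t ht => (hslope t ht).trans hs_le

theorem le_integral_of_sub_deriv_le {a b c : ℝ} {f G G' : ℝ → ℝ} (hab : a ≤ b)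
    (hG : ∀ t ∈ Icc a b, HasDerivWithinAt G (G' t) (Icc a b) t)
    (hG' : IntervalIntegrable G' volume a b) (hf : IntervalIntegrable f volume a b)
    (hle : ∀ t ∈ Icc a b, c - G' t ≤ f t) :
    c * (b - a) - (G b - G a) ≤ ∫ t in a..b, f t := by
  have hFTC : ∫ t in a..b, G' t = G b - G a :=
    integral_eq_sub_of_hasDeriv_right_of_le hab (HasDerivWithinAt.continuousOn hG)
      (fun t ht => ((hG t (Ioo_subset_Icc_self ht)).hasDerivAt
        (Icc_mem_nhds ht.1 ht.2)).hasDerivWithinAt) hG'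
  calc c * (b - a) - (G b - G a) = ∫ t in a..b, (c - G' t) := by
        rw [integral_sub intervalIntegrable_const hG', intervalIntegral.integral_const, hFTC,
          smul_eq_mul, mul_comm]
    _ ≤ ∫ t in a..b, f t := integral_mono_on hab (intervalIntegrable_const.sub hG') hf hle

theorem continuousOn_cutoff {ρ : ℝ} {ψ : ℝ → ℝ} (hρ : 2 ≤ ρ)
    (hψ1 : ∀ t ∈ Icc (0:ℝ) 1, ψ t = t) (hψ2 : ∀ t ∈ Icc (1:ℝ) (ρ - 1), ψ t = 1)
    (hψ3 : ∀ t ∈ Icc (ρ - 1) ρ, ψ t = ρ - t) : ContinuousOn ψ (Icc 0 ρ) := by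
  have h1 : ContinuousOn ψ (Icc 0 1) := continuousOn_id.congr hψ1
  have h2 : ContinuousOn ψ (Icc 1 (ρ - 1)) := continuousOn_const.congr hψ2
  have h3 : ContinuousOn ψ (Icc (ρ - 1) ρ) := (continuousOn_const.sub continuousOn_id).congr hψ3
  rw [← Icc_union_Icc_eq_Icc (by linarith : (0:ℝ) ≤ ρ - 1) (by linarith : ρ - 1 ≤ ρ),
    ← Icc_union_Icc_eq_Icc zero_le_one (by linarith : (1:ℝ) ≤ ρ - 1)]
  exact (h1.union_of_isClosed h2 isClosed_Icc isClosed_Icc).union_of_isClosed h3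
    (isClosed_Icc.union isClosed_Icc) isClosed_Icc

section CutoffPieces

variable {ρ K C : ℝ} {ψ h' h'' : ℝ → ℝ}
  (hd2 : ∀ t ∈ Icc (0:ℝ) ρ, HasDerivWithinAt h' (h'' t) (Icc 0 ρ) t)
  (hc2 : ContinuousOn h'' (Icc 0 ρ))
include hd2 hc2

theorem le_integral_cutoff_sq_mul_Icc_zero_one (hρ : 1 ≤ ρ) (hψ1 : ∀ t ∈ Icc (0:ℝ) 1, ψ t = t)
    (hb : ∀ t ∈ Icc (0:ℝ) 1, |1 / 2 - h'' t| ≤ K)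
    (hint : IntervalIntegrable (fun t => ψ t ^ 2 * (1 / 2 - h'' t)) volume 0 1) :
    1 / 2 - K - (h' 1 - h' 0) ≤ ∫ t in (0:ℝ)..1, ψ t ^ 2 * (1 / 2 - h'' t) := by
  have hsub : Icc (0:ℝ) 1 ⊆ Icc 0 ρ := Icc_subset_Icc_right hρ
  have := le_integral_of_sub_deriv_le (c := 1 / 2 - K) zero_le_one
    (fun t ht => (hd2 t (hsub ht)).mono hsub)
    ((hc2.mono hsub).intervalIntegrable_of_Icc zero_le_one) hint fun t ht => by
      obtain ⟨hlo, hhi⟩ := abs_le.1 (hb t ht)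
      rw [hψ1 t ht]
      nlinarith [mul_nonneg (by nlinarith [ht.1, ht.2] : 0 ≤ 1 - t ^ 2)
          (by linarith : 0 ≤ K - (1 / 2 - h'' t)),
        mul_nonneg (sq_nonneg t) (by linarith : 0 ≤ K)]
  linarith

theorem le_integral_cutoff_sq_mul_Icc_one_sub_one (hρ : 2 ≤ ρ)
    (hψ2 : ∀ t ∈ Icc (1:ℝ) (ρ - 1), ψ t = 1)
    (hint : IntervalIntegrable (fun t => ψ t ^ 2 * (1 / 2 - h'' t)) volume 1 (ρ - 1)) :
    (ρ - 2) / 2 - (h' (ρ - 1) - h' 1) ≤ ∫ t in (1:ℝ)..(ρ - 1), ψ t ^ 2 * (1 / 2 - h'' t) := by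
  have hsub : Icc (1:ℝ) (ρ - 1) ⊆ Icc 0 ρ := Icc_subset_Icc zero_le_one (by linarith)
  have := le_integral_of_sub_deriv_le (c := 1 / 2) (by linarith : (1:ℝ) ≤ ρ - 1)
    (fun t ht => (hd2 t (hsub ht)).mono hsub)
    ((hc2.mono hsub).intervalIntegrable_of_Icc (by linarith)) hint fun t ht => by
      rw [hψ2 t ht, one_pow, one_mul]
  linarith

theorem le_integral_cutoff_sq_mul_Icc_sub_one (hρ : 1 ≤ ρ)
    (hψ3 : ∀ t ∈ Icc (ρ - 1) ρ, ψ t = ρ - t) (hslope : ∀ t ∈ Icc (ρ - 1) ρ, |h' t| ≤ 2 + C)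
    (hint : IntervalIntegrable (fun t => ψ t ^ 2 * (1 / 2 - h'' t)) volume (ρ - 1) ρ) :
    h' (ρ - 1) - 2 * (2 + C) ≤ ∫ t in (ρ - 1)..ρ, ψ t ^ 2 * (1 / 2 - h'' t) := by
  have hsub : Icc (ρ - 1) ρ ⊆ Icc 0 ρ := Icc_subset_Icc_left (by linarith)
  have hweight : ∀ t : ℝ, HasDerivAt (fun s => (ρ - s) ^ 2) (-(2 * (ρ - t))) t := fun t =>
    (((hasDerivAt_id' t).const_sub ρ).pow 2).congr_deriv (by push_cast; ring)
  have hG' : ContinuousOn (fun t => -(2 * (ρ - t)) * h' t + (ρ - t) ^ 2 * h'' t) (Icc 0 ρ) :=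
    ((continuous_const.mul (continuous_const.sub continuous_id)).neg.continuousOn.mul
      (HasDerivWithinAt.continuousOn hd2)).add
      (((continuous_const.sub continuous_id).pow 2).continuousOn.mul hc2)
  -- Integration by parts against the weight `(ρ - t)²`, which vanishes at `ρ`.
  have := le_integral_of_sub_deriv_le (c := -(2 * (2 + C))) (G := fun s => (ρ - s) ^ 2 * h' s)
    (G' := fun t => -(2 * (ρ - t)) * h' t + (ρ - t) ^ 2 * h'' t)
    (by linarith : ρ - 1 ≤ ρ)
    (fun t ht => ((hweight t).hasDerivWithinAt.mul (hd2 t (hsub ht))).mono hsub)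
    ((hG'.mono hsub).intervalIntegrable_of_Icc (by linarith)) hint fun t ht => by
      obtain ⟨hlo, hhi⟩ := abs_le.1 (hslope t ht)
      rw [hψ3 t ht]
      nlinarith [mul_nonneg (by linarith [ht.1] : 0 ≤ 1 - (ρ - t)) (by linarith : 0 ≤ 2 + C),
        mul_nonneg (by linarith [ht.2] : 0 ≤ ρ - t) (by linarith : 0 ≤ 2 + C - h' t),
        sq_nonneg (ρ - t)]
  simp only [sub_self, sub_sub_cancel] at this
  linarith

end CutoffPieces

theorem stmt_11_general (n : ℕ) (C K ρ : ℝ) (hρ : 2 ≤ ρ)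
    (ψ h h' h'' : ℝ → ℝ)
    (hψ1 : ∀ t ∈ Set.Icc (0:ℝ) 1, ψ t = t)
    (hψ2 : ∀ t ∈ Set.Icc (1:ℝ) (ρ - 1), ψ t = 1)
    (hψ3 : ∀ t ∈ Set.Icc (ρ - 1) ρ, ψ t = ρ - t)
    (hd1 : ∀ t ∈ Set.Icc (0:ℝ) ρ, HasDerivWithinAt h (h' t) (Set.Icc 0 ρ) t)
    (hd2 : ∀ t ∈ Set.Icc (0:ℝ) ρ, HasDerivWithinAt h' (h'' t) (Set.Icc 0 ρ) t)
    (hc2 : ContinuousOn h'' (Set.Icc 0 ρ))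
    (hb : ∀ t ∈ Set.Icc (0:ℝ) 1, |1 / 2 - h'' t| ≤ K)
    (hc : (∫ t in (0:ℝ)..ρ, (ψ t) ^ 2 * (1 / 2 - h'' t)) ≤ 2 * ((n : ℝ) - 1))
    (hd : ∀ t ∈ Set.Icc (ρ - 1) ρ,
      0 ≤ h t + C ∧ |h' t| ≤ Real.sqrt (h t + C))
    (he : |h ρ| ≤ C) :
    ρ ≤ 4 * (n : ℝ) + 2 * K + 16 * C + 8 + 2 * |h' 0| := by
  have hsub : Icc (ρ - 1) ρ ⊆ Icc 0 ρ := Icc_subset_Icc_left (by linarith)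
  have hslope : ∀ t ∈ Icc (ρ - 1) ρ, |h' t| ≤ 2 + C :=
    abs_deriv_le_of_abs_deriv_le_sqrt (by linarith) (by linarith)
      (fun t ht => (hd1 t (hsub ht)).mono hsub) hd (le_of_abs_le he)
  have hint : ∀ a b, 0 ≤ a → a ≤ b → b ≤ ρ →
      IntervalIntegrable (fun t => ψ t ^ 2 * (1 / 2 - h'' t)) volume a b := fun a b h0 hab hbρ =>
    (((continuousOn_cutoff hρ hψ1 hψ2 hψ3).pow 2).mul (continuousOn_const.sub hc2)).mono
      (Icc_subset_Icc h0 hbρ) |>.intervalIntegrable_of_Icc hab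
  have hint₁ := hint 0 1 le_rfl zero_le_one (by linarith)
  have hint₂ := hint 1 (ρ - 1) zero_le_one (by linarith) (by linarith)
  have hint₃ := hint (ρ - 1) ρ (by linarith) (by linarith) le_rfl
  rw [← integral_add_adjacent_intervals (hint₁.trans hint₂) hint₃,
    ← integral_add_adjacent_intervals hint₁ hint₂] at hc
  linarith [le_integral_cutoff_sq_mul_Icc_zero_one hd2 hc2 (by linarith) hψ1 hb hint₁,
    le_integral_cutoff_sq_mul_Icc_one_sub_one hd2 hc2 hρ hψ2 hint₂,
    le_integral_cutoff_sq_mul_Icc_sub_one hd2 hc2 (by linarith) hψ3 hslope hint₃,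
    neg_abs_le (h' 0), (abs_nonneg (h ρ)).trans he]

/-- the quantitative core of Theorem 2: with the cutoff `ψ` on `[0, ρ]`,
`r = 1/2 - h''`, `h'(ρ) = 0`, `|r| ≤ K` on `[0, 1]`, `∫₀^ρ ψ² r ≤ 2(n-1)`,
`h + C ≥ 0` and `|h'| ≤ √(h + C)` on `[ρ-1, ρ]`, and `|h(ρ)| ≤ C`, we get
`ρ ≤ 4n + 2K + 16C + 8 + 2|h'(0)|`. -/
theorem stmt_11 (n : ℕ) (hn : 1 ≤ n) (C K ρ : ℝ) (hC : 0 ≤ C) (hK : 0 ≤ K) (hρ : 2 ≤ ρ)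
    (ψ h h' h'' : ℝ → ℝ)
    (hψmem : ∀ t ∈ Set.Icc (0:ℝ) ρ, ψ t ∈ Set.Icc (0:ℝ) 1)
    (hψ1 : ∀ t ∈ Set.Icc (0:ℝ) 1, ψ t = t)
    (hψ2 : ∀ t ∈ Set.Icc (1:ℝ) (ρ - 1), ψ t = 1)
    (hψ3 : ∀ t ∈ Set.Icc (ρ - 1) ρ, ψ t = ρ - t)
    (hd1 : ∀ t ∈ Set.Icc (0:ℝ) ρ, HasDerivWithinAt h (h' t) (Set.Icc 0 ρ) t)
    (hd2 : ∀ t ∈ Set.Icc (0:ℝ) ρ, HasDerivWithinAt h' (h'' t) (Set.Icc 0 ρ) t)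
    (hc2 : ContinuousOn h'' (Set.Icc 0 ρ))
    (ha : h' ρ = 0)
    (hb : ∀ t ∈ Set.Icc (0:ℝ) 1, |1 / 2 - h'' t| ≤ K)
    (hc : (∫ t in (0:ℝ)..ρ, (ψ t) ^ 2 * (1 / 2 - h'' t)) ≤ 2 * ((n : ℝ) - 1))
    (hd : ∀ t ∈ Set.Icc (ρ - 1) ρ,
      0 ≤ h t + C ∧ |h' t| ≤ Real.sqrt (h t + C))
    (he : |h ρ| ≤ C) :
    ρ ≤ 4 * (n : ℝ) + 2 * K + 16 * C + 8 + 2 * |h' 0| :=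
  stmt_11_general n C K ρ hρ ψ h h' h'' hψ1 hψ2 hψ3 hd1 hd2 hc2 hb hc hd he
end
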